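/- If u is an associative Lyndon–Shirshov word and w is any word properly containing u as a subword (w = a u b with a, b not both empty) such that w is also an associative Lyndon–Shirshov word, then in the Lyndon factorization c = c_1...c_k (c_1 ≤ ... ≤ c_k) of the word c defined by Shirshov's Lemma ([w] = [a [uc] d] with b = cd), each c_i satisfies c_i < u in the lexicographic order. -/

import Mathlib

noncomputable section

variable {X : Type*} [LinearOrder X] (k : Type*) [Field k]

def llt : List X → List X → Prop
  | [], _ => False
  | _ :: _, [] => True
  | a :: u, b :: v => a < b ∨ (a = b ∧ llt u v)

def IsLS (w : List X) : Prop :=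
  w ≠ [] ∧ ∀ u v : List X, u ≠ [] → v ≠ [] → w = u ++ v → llt (v ++ u) w

/-- deg-lex order -/
def dlt (u v : List X) : Prop :=
  u.length < v.length ∨ (u.length = v.length ∧ llt u v)

/-- the free associative algebra with basis the free monoid on X -/
abbrev FA (k : Type*) [Field k] (X : Type*) := MonoidAlgebra k (FreeMonoid X)

/-- the generators x ∈ X inside the free associative algebra -/
def gens : Set (FA k X) := Set.range fun x : X => MonoidAlgebra.single (FreeMonoid.of x) (1 : k)

/-- the leading (deg-lex maximal) monomial of f is w -/
def IsLeading (f : FA k X) (w : List X) : Prop :=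
  f.coeff (FreeMonoid.ofList w) ≠ 0 ∧ ∀ v : List X, f.coeff (FreeMonoid.ofList v) ≠ 0 → v = w ∨ dlt v w

/-- underlying associative word of a nonassociative word -/
def mword : FreeMagma X → List X
  | .of x => [x]
  | .mul a b => mword a ++ mword b

/-- evaluation of a nonassociative word in the free associative algebra
via the commutator bracket -/
def evalM : FreeMagma X → FA k X
  | .of x => MonoidAlgebra.single (FreeMonoid.of x) 1
  | .mul a b => evalM a * evalM b - evalM b * evalM a

/-- nonassociative Lyndon--Shirshov word -/
def IsNLS : FreeMagma X → Prop
  | .of _ => True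
  | .mul a b => IsNLS a ∧ IsNLS b ∧ IsLS (mword a ++ mword b) ∧
      (match a with
        | .of _ => True
        | .mul _ a2 => ¬ llt (mword b) (mword a2))

/-- standard bracketing tree: at each node the right factor is the longest
proper Lyndon--Shirshov suffix -/
def IsStd : FreeMagma X → Prop
  | .of _ => True
  | .mul a b => IsStd a ∧ IsStd b ∧ IsLS (mword a ++ mword b) ∧ IsLS (mword b) ∧
      ∀ s : List X, s ≠ [] → s ≠ mword a ++ mword b → s <:+ mword a ++ mword b →
        IsLS s → s.length ≤ (mword b).length

/-- flattening of a tree of trees -/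
def mjoin : FreeMagma (FreeMagma X) → FreeMagma X
  | .of t => t
  | .mul a b => .mul (mjoin a) (mjoin b)

/-- the list of leaves of a binary tree -/
def leaves {α : Type*} : FreeMagma α → List α
  | .of x => [x]
  | .mul a b => leaves a ++ leaves b

/-- `Occurs s t p` : `s` occurs as a subtree of `t` with exactly the word `p`
to its left -/
def Occurs (s : FreeMagma X) : FreeMagma X → List X → Prop
  | .of x, p => s = .of x ∧ p = []
  | .mul l r, p => (s = .mul l r ∧ p = []) ∨ Occurs s l p ∨
      ∃ q, Occurs s r q ∧ p = mword l ++ q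


/-!
By induction along the standard bracketing `[w] = [[w₁][w₂]]`, the Lyndon–Shirshov word `u`
cannot straddle the split point unless it starts at the beginning of `w`: if `w₁ = a r` and
`u = r u₂` with `a, r, u₂` nonempty, then `r w₂` is a Lyndon–Shirshov proper suffix of `w`
longer than `w₂`. Hence `u` begins the word `u c` of some subtree `[u c]`. Since `u c` is
Lyndon–Shirshov, its proper suffix `c_k`, the largest factor of `c`, satisfies
`c_k < u c < u`.
-/

theorem not_llt_nil (v : List X) : ¬ llt [] v := by simp [llt]

theorem llt_irrefl (x : List X) : ¬ llt x x := by
  induction x with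
  | nil => simp [llt]
  | cons a t ih => simp [llt, ih]

theorem llt_trans : ∀ {x y z : List X}, llt x y → llt y z → llt x z
  | [], y, _, h, _ => absurd h (not_llt_nil y)
  | _ :: _, [], z, _, h => absurd h (not_llt_nil z)
  | _ :: _, _ :: _, [], _, _ => trivial
  | _ :: _, _ :: _, _ :: _, h1, h2 => by
    rcases h1 with h1 | ⟨rfl, h1⟩ <;> rcases h2 with h2 | ⟨rfl, h2⟩
    · exact Or.inl (h1.trans h2)
    · exact Or.inl h1
    · exact Or.inl h2
    · exact Or.inr ⟨rfl, llt_trans h1 h2⟩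

theorem llt_trichotomy : ∀ x y : List X, x = y ∨ llt x y ∨ llt y x
  | [], [] => Or.inl rfl
  | [], _ :: _ => Or.inr (Or.inr trivial)
  | _ :: _, [] => Or.inr (Or.inl trivial)
  | a :: t, b :: s => by
    rcases lt_trichotomy a b with h | rfl | h
    · exact Or.inr (Or.inl (Or.inl h))
    · rcases llt_trichotomy t s with rfl | h | h
      · exact Or.inl rfl
      · exact Or.inr (Or.inl (Or.inr ⟨rfl, h⟩))
      · exact Or.inr (Or.inr (Or.inr ⟨rfl, h⟩))
    · exact Or.inr (Or.inr (Or.inl h))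

theorem llt_asymm {x y : List X} (h : llt x y) : ¬ llt y x :=
  fun h' => llt_irrefl x (llt_trans h h')

theorem llt_of_not_llt_of_llt {x y z : List X} (hxy : ¬ llt y x) (hyz : llt y z) : llt x z := by
  rcases llt_trichotomy x y with rfl | h | h
  · exact hyz
  · exact llt_trans h hyz
  · exact absurd h hxy

theorem not_llt_trans {x y z : List X} (hxy : ¬ llt y x) (hyz : ¬ llt z y) : ¬ llt z x :=
  fun hzx => by
    rcases llt_trichotomy x y with rfl | h | h
    · exact hyz hzx
    · exact hyz (llt_trans hzx h)
    · exact hxy h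

theorem llt_append_of_ne_nil (x : List X) {s : List X} (hs : s ≠ []) : llt (x ++ s) x := by
  induction x with
  | nil => obtain ⟨c, r, rfl⟩ := List.exists_cons_of_ne_nil hs; trivial
  | cons a t ih => exact Or.inr ⟨rfl, ih⟩

theorem llt_append_left_iff (x : List X) {u v : List X} : llt (x ++ u) (x ++ v) ↔ llt u v := by
  induction x with
  | nil => rfl
  | cons a t ih => simp [llt, ih]

theorem llt_append_append_of_not_prefix :
    ∀ {x y : List X}, llt x y → ¬ y <+: x → ∀ a b : List X, llt (x ++ a) (y ++ b)
  | [], y, h, _, _, _ => absurd h (not_llt_nil y)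
  | _ :: _, [], _, hp, _, _ => absurd List.nil_prefix hp
  | _ :: _, _ :: _, h, hp, a, b => by
    rcases h with h | ⟨rfl, h⟩
    · exact Or.inl h
    · exact Or.inr ⟨rfl, llt_append_append_of_not_prefix h
        (fun hps => hp (List.cons_prefix_cons.mpr ⟨rfl, hps⟩)) a b⟩

theorem llt_or_isPrefix_of_llt_append (p : List X) :
    ∀ {q w : List X}, llt (q ++ p) w → llt q w ∨ q <+: w
  | [], _, _ => Or.inr List.nil_prefix
  | _ :: _, [], _ => Or.inl trivial
  | _ :: _, _ :: _, h => by
    rcases h with h | ⟨rfl, h⟩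
    · exact Or.inl (Or.inl h)
    · rcases llt_or_isPrefix_of_llt_append p h with h' | h'
      · exact Or.inl (Or.inr ⟨rfl, h'⟩)
      · exact Or.inr (List.cons_prefix_cons.mpr ⟨rfl, h'⟩)

theorem llt_of_llt_append_right {s : List X} :
    ∀ {p q : List X}, p.length = q.length → llt (p ++ s) (q ++ s) → llt p q
  | [], [], _, h => absurd h (llt_irrefl s)
  | _ :: _, _ :: _, hl, h => by
    rcases h with h | ⟨rfl, h⟩
    · exact Or.inl h
    · exact Or.inr ⟨rfl, llt_of_llt_append_right (by simpa using hl) h⟩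

theorem List.IsSuffix.length_lt_of_ne {α : Type*} {s w : List α} (h : s <:+ w) (hne : s ≠ w) :
    s.length < w.length :=
  lt_of_le_of_ne h.length_le (mt h.eq_of_length hne)

theorem isSuffix_or_exists_of_isSuffix_append {α : Type*} {s p q : List α} (h : s <:+ p ++ q) :
    s <:+ q ∨ ∃ a, a <:+ p ∧ s = a ++ q := by
  obtain ⟨r, hr⟩ := h
  rcases List.append_eq_append_iff.mp hr with ⟨a, rfl, rfl⟩ | ⟨c, -, rfl⟩
  · exact Or.inr ⟨a, List.suffix_append r a, rfl⟩
  · exact Or.inl (List.suffix_append c s)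

theorem isLS_singleton (x : X) : IsLS [x] := by
  refine ⟨List.cons_ne_nil x [], fun u v hu hv h => absurd (congrArg List.length h) ?_⟩
  simp only [List.length_append, List.length_singleton]
  have := List.length_pos_iff.mpr hu
  have := List.length_pos_iff.mpr hv
  omega

theorem IsLS.eq_of_isPrefix_of_isSuffix {w s : List X} (hw : IsLS w) (hpre : s <+: w)
    (hsuf : s <:+ w) (hne : s ≠ []) : s = w := by
  by_contra hsw
  obtain ⟨p, hp⟩ := hpre
  obtain ⟨q, hq⟩ := hsuf
  have hpne : p ≠ [] := by rintro rfl; exact hsw (by simpa using hp)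
  have hqne : q ≠ [] := by rintro rfl; exact hsw (by simpa using hq)
  have hlen : p.length = q.length := by
    have := congrArg List.length hp
    have := congrArg List.length hq
    simp only [List.length_append] at *
    omega
  have hqp : llt q p := (llt_append_left_iff s).mp (hp ▸ hw.2 q s hqne hne hq.symm)
  have hpq : llt p q := llt_of_llt_append_right hlen (hq ▸ hw.2 s p hne hpne hp.symm)
  exact llt_asymm hpq hqp

theorem IsLS.llt_of_isSuffix {w s : List X} (hw : IsLS w) (hsuf : s <:+ w) (hne : s ≠ [])
    (hsw : s ≠ w) : llt s w := by
  obtain ⟨p, hp⟩ := hsuf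
  have hpne : p ≠ [] := by rintro rfl; exact hsw (by simpa using hp)
  exact (llt_or_isPrefix_of_llt_append p (hw.2 p s hpne hne hp.symm)).resolve_right
    fun hpre => hsw (hw.eq_of_isPrefix_of_isSuffix hpre ⟨p, hp⟩ hne)

theorem IsLS.llt_append_of_isSuffix {w s : List X} (hw : IsLS w) (hsuf : s <:+ w)
    (hne : s ≠ []) (hsw : s ≠ w) (x y : List X) : llt (s ++ x) (w ++ y) :=
  llt_append_append_of_not_prefix (hw.llt_of_isSuffix hsuf hne hsw)
    (fun hpre => (hsuf.length_lt_of_ne hsw).not_ge hpre.length_le) x y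

theorem isLS_of_forall_isSuffix_llt {w : List X} (hne : w ≠ [])
    (H : ∀ s, s <:+ w → s ≠ [] → s ≠ w → llt s w) : IsLS w := by
  refine ⟨hne, fun u v hu hv h => ?_⟩
  have hvw : v ≠ w := by
    rintro rfl
    have := congrArg List.length h
    rw [List.length_append] at this
    exact hu (List.length_eq_zero_iff.mp (by omega))
  have hlt := llt_append_append_of_not_prefix (H v ⟨u, h.symm⟩ hv hvw)
    (fun hpre => (List.IsSuffix.length_lt_of_ne ⟨u, h.symm⟩ hvw).not_ge hpre.length_le) u []
  rwa [List.append_nil] at hlt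

theorem IsLS.append {p q : List X} (hp : IsLS p) (hq : IsLS q) (hqp : llt q p) :
    IsLS (p ++ q) := by
  have hq_lt : llt q (p ++ q) := by
    by_cases hpre : p <+: q
    · obtain ⟨r, rfl⟩ := hpre
      have hr : r ≠ [] := by rintro rfl; exact llt_irrefl p (by simpa using hqp)
      have hpr : r ≠ p ++ r := fun h => hp.1 (by simpa using congrArg List.length h)
      exact (llt_append_left_iff p).mpr (hq.llt_of_isSuffix (List.suffix_append p r) hr hpr)
    · simpa using llt_append_append_of_not_prefix hqp hpre [] q
  have hsuf_q : ∀ s, s <:+ q → s ≠ [] → llt s (p ++ q) := fun s hs hne => by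
    rcases eq_or_ne s q with rfl | hsq
    · exact hq_lt
    · exact llt_trans (hq.llt_of_isSuffix hs hne hsq) hq_lt
  refine isLS_of_forall_isSuffix_llt (by simp [hp.1]) fun s hs hne hspq => ?_
  rcases isSuffix_or_exists_of_isSuffix_append hs with hs | ⟨a, ha, rfl⟩
  · exact hsuf_q s hs hne
  · rcases eq_or_ne a [] with rfl | ha_ne
    · exact hsuf_q q List.suffix_rfl hne
    · exact hp.llt_append_of_isSuffix ha ha_ne (by rintro rfl; exact hspq rfl) q q

theorem IsLS.append_of_overlap {u₁ u₂ b : List X} (hu₁ : u₁ ≠ []) (hu₂ : u₂ ≠ [])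
    (hu : IsLS (u₁ ++ u₂)) (hw : IsLS (u₂ ++ b)) : IsLS (u₁ ++ (u₂ ++ b)) := by
  have hlt : ∀ a, a <:+ u₁ → a ≠ u₁ → llt (a ++ (u₂ ++ b)) (u₁ ++ (u₂ ++ b)) := by
    intro a ha hau
    have hsuf : a ++ u₂ <:+ u₁ ++ u₂ := by
      obtain ⟨r, rfl⟩ := ha
      exact ⟨r, (List.append_assoc r a u₂).symm⟩
    have hne : a ++ u₂ ≠ u₁ ++ u₂ := fun h => hau (List.append_cancel_right h)
    simpa using hu.llt_append_of_isSuffix hsuf (by simp [hu₂]) hne b b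
  refine isLS_of_forall_isSuffix_llt (by simp [hu₁]) fun s hs hne hsw => ?_
  rcases isSuffix_or_exists_of_isSuffix_append hs with hs | ⟨a, ha, rfl⟩
  · have hlt₀ := hlt [] List.nil_suffix hu₁.symm
    rcases eq_or_ne s (u₂ ++ b) with rfl | hs'
    · exact hlt₀
    · exact llt_trans (hw.llt_of_isSuffix hs hne hs') hlt₀
  · exact hlt a ha (by rintro rfl; exact hsw rfl)

def IsLyndonFactorization (cs : List (List X)) (c : List X) : Prop :=
  (∀ x ∈ cs, IsLS x) ∧ cs.IsChain (fun p q => ¬ llt q p) ∧ cs.flatten = c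

theorem IsLyndonFactorization.exists_append {cs : List (List X)} {c p : List X}
    (hcs : IsLyndonFactorization cs c) (hp : IsLS p) :
    ∃ cs', IsLyndonFactorization cs' (p ++ c) := by
  obtain ⟨hls, hchain, rfl⟩ := hcs
  induction cs generalizing p with
  | nil => exact ⟨[p], by simpa using hp, List.isChain_singleton p, by simp⟩
  | cons q rest ih =>
    have hq : IsLS q := hls q List.mem_cons_self
    by_cases hqp : llt q p
    · obtain ⟨cs', hcs'⟩ := ih (hp.append hq hqp)
        (fun x hx => hls x (List.mem_cons_of_mem q hx)) hchain.tail
      exact ⟨cs', by simpa using hcs'⟩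
    · refine ⟨p :: q :: rest, ?_, List.isChain_cons_cons.mpr ⟨hqp, hchain⟩, rfl⟩
      rintro x (_ | ⟨_, hx⟩)
      · exact hp
      · exact hls x hx

theorem exists_isLyndonFactorization (c : List X) : ∃ cs, IsLyndonFactorization cs c := by
  induction c with
  | nil => exact ⟨[], by simp, List.isChain_nil, rfl⟩
  | cons x c ih =>
    obtain ⟨cs, hcs⟩ := ih
    exact hcs.exists_append (isLS_singleton x)

theorem IsLyndonFactorization.llt_of_isLS_append {cs : List (List X)} {u c : List X}
    (hcs : IsLyndonFactorization cs c) (hu : u ≠ []) (huc : IsLS (u ++ c)) :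
    ∀ ci ∈ cs, llt ci u := by
  obtain ⟨hls, hchain, rfl⟩ := hcs
  intro ci hci
  have hne : cs ≠ [] := List.ne_nil_of_mem hci
  set ck := cs.getLast hne
  have hck_max : ¬ llt ck ci := by
    have : Trans (fun p q : List X => ¬ llt q p) (fun p q => ¬ llt q p) (fun p q => ¬ llt q p) :=
      ⟨fun hxy hyz => not_llt_trans hxy hyz⟩
    exact hchain.pairwise.rel_getLast_of_rel_getLast_getLast hci (llt_irrefl ck)
  have hck_suf : ck <:+ cs.flatten := by
    conv_rhs => rw [← List.dropLast_append_getLast hne]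
    simp [ck]
  have hck_ne : ck ≠ [] := (hls ck (List.getLast_mem hne)).1
  have hc_ne : cs.flatten ≠ [] := fun h => hck_ne (List.suffix_nil.mp (h ▸ hck_suf))
  have hck_lt : llt ck u := by
    refine llt_trans (huc.llt_of_isSuffix (hck_suf.trans (List.suffix_append u _)) hck_ne ?_)
      (llt_append_of_ne_nil u hc_ne)
    intro h
    have := hck_suf.length_le
    rw [h, List.length_append] at this
    exact hu (List.length_eq_zero_iff.mp (by omega))
  exact llt_of_not_llt_of_llt hck_max hck_lt

theorem IsStd.isLS : ∀ {t : FreeMagma X}, IsStd t → IsLS (mword t)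
  | .of x, _ => isLS_singleton x
  | .mul _ _, h => h.2.2.1

theorem occurs_self {α : Type*} : ∀ t : FreeMagma α, Occurs t t []
  | .of _ => ⟨rfl, rfl⟩
  | .mul _ _ => Or.inl ⟨rfl, rfl⟩

theorem Occurs.exists_eq_append {α : Type*} {s t : FreeMagma α} {p : List α}
    (h : Occurs s t p) : ∃ q, mword t = p ++ mword s ++ q := by
  induction t generalizing p with
  | ih1 x =>
    obtain ⟨rfl, rfl⟩ := h
    exact ⟨[], rfl⟩
  | ih2 l r ihl ihr =>
    rcases h with ⟨rfl, rfl⟩ | h | ⟨p', h, rfl⟩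
    · exact ⟨[], by simp⟩
    · obtain ⟨q, hq⟩ := ihl h
      exact ⟨q ++ mword r, by simp [mword, hq]⟩
    · obtain ⟨q, hq⟩ := ihr h
      exact ⟨q, by simp [mword, hq]⟩

theorem IsStd.not_isLS_straddle {t₁ t₂ : FreeMagma X} {a r u₂ b : List X}
    (hstd : IsStd (t₁ * t₂)) (ha : a ≠ []) (hr : r ≠ []) (hu₂ : u₂ ≠ [])
    (h₁ : mword t₁ = a ++ r) (h₂ : mword t₂ = u₂ ++ b) (hu : IsLS (r ++ u₂)) : False := by
  obtain ⟨-, -, -, hLS₂, hmax⟩ := hstd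
  have hLS : IsLS (r ++ mword t₂) := h₂ ▸ hu.append_of_overlap hr hu₂ (h₂ ▸ hLS₂)
  have hsuf : r ++ mword t₂ <:+ mword t₁ ++ mword t₂ := ⟨a, by rw [h₁, List.append_assoc]⟩
  have hne : r ++ mword t₂ ≠ mword t₁ ++ mword t₂ := fun h => ha (by
    have := congrArg List.length h
    have := congrArg List.length h₁
    simp only [List.length_append] at *
    exact List.length_eq_zero_iff.mp (by omega))
  have := hmax _ (by simp [hr]) hne hsuf hLS
  rw [List.length_append] at this
  exact hr (List.length_eq_zero_iff.mp (by omega))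

theorem IsStd.exists_occurs_isPrefix {u : List X} (hu : IsLS u) {t : FreeMagma X} :
    ∀ {a b : List X}, IsStd t → mword t = a ++ u ++ b →
      ∃ s, IsStd s ∧ Occurs s t a ∧ u <+: mword s := by
  induction t with
  | ih1 x =>
    intro a b hstd hm
    rcases eq_or_ne a [] with rfl | ha
    · exact ⟨_, hstd, occurs_self _, ⟨b, by simpa using hm.symm⟩⟩
    · have := congrArg List.length hm
      simp only [mword, List.length_append, List.length_singleton] at this
      have := List.length_pos_iff.mpr ha
      have := List.length_pos_iff.mpr hu.1
      omega
  | ih2 t₁ t₂ ih₁ ih₂ =>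
    intro a b hstd hm
    rcases eq_or_ne a [] with rfl | ha
    · exact ⟨_, hstd, occurs_self _, ⟨b, by simpa using hm.symm⟩⟩
    have hm : mword t₁ ++ mword t₂ = a ++ (u ++ b) := by rw [← List.append_assoc]; exact hm
    rcases List.append_eq_append_iff.mp hm with ⟨a', rfl, h₂⟩ | ⟨r, h₁, h₂⟩
    · obtain ⟨s, hs, hocc, hpre⟩ := ih₂ hstd.2.1 (by rw [h₂, List.append_assoc])
      exact ⟨s, hs, Or.inr (Or.inr ⟨a', hocc, rfl⟩), hpre⟩
    rcases List.append_eq_append_iff.mp h₂ with ⟨s₀, rfl, -⟩ | ⟨u₂, rfl, hu₂b⟩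
    · obtain ⟨s, hs, hocc, hpre⟩ := ih₁ hstd.1 (by rw [h₁, List.append_assoc])
      exact ⟨s, hs, Or.inr (Or.inl hocc), hpre⟩
    rcases eq_or_ne r [] with rfl | hr
    · obtain ⟨s, hs, hocc, hpre⟩ := ih₂ hstd.2.1 (a := []) (by simpa using hu₂b)
      exact ⟨s, hs, Or.inr (Or.inr ⟨[], hocc, by simpa using h₁.symm⟩), hpre⟩
    rcases eq_or_ne u₂ [] with rfl | hu₂
    · obtain ⟨s, hs, hocc, hpre⟩ := ih₁ hstd.1 (b := []) (by simpa using h₁)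
      exact ⟨s, hs, Or.inr (Or.inl hocc), hpre⟩
    exact (hstd.not_isLS_straddle ha hr hu₂ h₁ hu₂b hu).elim

theorem stmt_14_general {w u a b : List X} (hu : IsLS u)
    (hfac : w = a ++ u ++ b)
    (t : FreeMagma X) (ht : mword t = w) (hstd : IsStd t) :
    ∃ c d : List X, b = c ++ d ∧
      ∃ s : FreeMagma X, Occurs s t a ∧ mword s = u ++ c ∧
        ∃ cs : List (List X), (∀ x ∈ cs, IsLS x) ∧
          List.Chain' (fun p q => ¬ llt q p) cs ∧ cs.flatten = c ∧
          ∀ ci ∈ cs, llt ci u := by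
  obtain ⟨s, hs, hocc, c, hsc⟩ := hstd.exists_occurs_isPrefix hu (ht.trans hfac)
  obtain ⟨d, hd⟩ := hocc.exists_eq_append
  have hb : b = c ++ d := by
    rw [ht, hfac, ← hsc] at hd
    simpa using hd
  obtain ⟨cs, hcs⟩ := exists_isLyndonFactorization c
  exact ⟨c, d, hb, s, hocc, hsc.symm, cs, hcs.1, hcs.2.1, hcs.2.2,
    hcs.llt_of_isLS_append hu.1 (hsc ▸ hs.isLS)⟩

/-- If `u` is Lyndon--Shirshov and `w = a ++ u ++ b` is Lyndon--Shirshov properly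
containing `u`, then in Shirshov's Lemma the subtree `[u c]` of the standard
bracketing of `w` matched to `u` satisfies: every factor of the Lyndon
factorization `c = c_1 ++ ... ++ c_k` is lexicographically smaller than `u`. -/
theorem stmt_14 {w u a b : List X} (hw : IsLS w) (hu : IsLS u)
    (hfac : w = a ++ u ++ b) (hproper : ¬ (a = [] ∧ b = []))
    (t : FreeMagma X) (ht : mword t = w) (hstd : IsStd t) :
    ∃ c d : List X, b = c ++ d ∧
      ∃ s : FreeMagma X, Occurs s t a ∧ mword s = u ++ c ∧
        ∃ cs : List (List X), (∀ x ∈ cs, IsLS x) ∧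
          List.Chain' (fun p q => ¬ llt q p) cs ∧ cs.flatten = c ∧
          ∀ ci ∈ cs, llt ci u :=
  stmt_14_general hu hfac t ht hstd
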